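/- arXiv:1811.04753 — 8 statements merged into one kernel-verified Lean document; each statement's English description precedes it below -/
import Mathlib

section
/- Let G = (V,E) be a finite simple graph with n = |V| vertices, and let T = C(n,2) − |E| + 2. Construct a temporal graph (G',λ) on vertex set V with lifetime T as follows: the snapshots at time slots 1 and 2 are both the complete graph K_n on V, and, enumerating the non-edges of G as f₃, f₄, …, f_T, the snapshot at time slot i (for 3 ≤ i ≤ T) contains exactly the single edge f_i. Then (G',λ) admits a proper temporal 2-coloring if and only if G is 4-colorable. -/
/-!
At time slots 1 and 2 every vertex gets a pair of colours in `Fin 2 × Fin 2`, i.e. one of four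
colours. An edge of `G` is active only at slots 1 and 2, since every later snapshot consists of a
non-edge of `G`, so a proper temporal 2-colouring is exactly a proper 4-colouring of `G` at these
two slots; each non-edge of `G` is active alone at its own slot and can always be coloured there.
-/

/-- A proper temporal 2-coloring of the temporal graph whose snapshot at time
`t` is `Gs t` and whose lifetime is `T`: every edge of the underlying graph
(i.e. every pair adjacent in some snapshot within `[1,T]`) is properly colored
at some time slot in `[1,T]` at which it is active. -/
def ProperTemporal2Coloring {V : Type*} (Gs : ℕ → SimpleGraph V) (T : ℕ)
    (φ : V → ℕ → Fin 2) : Prop :=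
  ∀ u v : V, (∃ t ∈ Finset.Icc 1 T, (Gs t).Adj u v) →
    ∃ t ∈ Finset.Icc 1 T, (Gs t).Adj u v ∧ φ u t ≠ φ v t

open Finset

namespace SimpleGraph

variable {V : Type*}

theorem colorable_mul_iff {G : SimpleGraph V} {m n : ℕ} :
    G.Colorable (m * n) ↔ ∃ (c₁ : V → Fin m) (c₂ : V → Fin n),
      ∀ ⦃u v⦄, G.Adj u v → c₁ u ≠ c₁ v ∨ c₂ u ≠ c₂ v := by
  constructor
  · rintro ⟨c⟩
    refine ⟨fun v => (finProdFinEquiv.symm (c v)).1, fun v => (finProdFinEquiv.symm (c v)).2,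
      fun u v huv => ?_⟩
    by_contra! h
    exact c.valid huv (finProdFinEquiv.symm.injective (Prod.ext h.1 h.2))
  · rintro ⟨c₁, c₂, hc⟩
    refine ⟨Coloring.mk (fun v => finProdFinEquiv (c₁ v, c₂ v)) fun huv h => ?_⟩
    obtain ⟨h₁, h₂⟩ := Prod.ext_iff.1 (finProdFinEquiv.injective h)
    exact (hc huv).elim (· h₁) (· h₂)

theorem colorable_two_fromEdgeSet_singleton (e : Sym2 V) : (fromEdgeSet {e}).Colorable 2 := by
  classical
  induction e using Sym2.ind with
  | h a b =>
    refine ⟨Coloring.mk (fun x => if x = a then 0 else 1) fun {u v} huv => ?_⟩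
    rw [fromEdgeSet_adj, Set.mem_singleton_iff, Sym2.eq_iff] at huv
    grind

end SimpleGraph

open SimpleGraph

section TemporalColoring

variable {V : Type*} {G : SimpleGraph V} {Gs : ℕ → SimpleGraph V} {T : ℕ}

theorem ProperTemporal2Coloring.colorable_four {φ : V → ℕ → Fin 2}
    (hφ : ProperTemporal2Coloring Gs T φ) (hT : 1 ≤ T) (h1 : Gs 1 = ⊤)
    (hle : ∀ t ∈ Icc 3 T, Gs t ≤ Gᶜ) : G.Colorable 4 := by
  refine colorable_mul_iff (m := 2) (n := 2) |>.2
    ⟨fun v => φ v 1, fun v => φ v 2, fun u v huv => ?_⟩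
  obtain ⟨t, ht, hadj, hne⟩ := hφ u v ⟨1, by simp [hT], by simp [h1, huv.ne]⟩
  obtain rfl | rfl | ht3 : t = 1 ∨ t = 2 ∨ t ∈ Icc 3 T := by simp only [mem_Icc] at ht ⊢; omega
  · exact .inl hne
  · exact .inr hne
  · exact absurd huv ((compl_adj G u v).1 (hle t ht3 hadj)).2

theorem exists_properTemporal2Coloring_of_colorable_four (hG : G.Colorable 4) (hT : 2 ≤ T)
    (h1 : Gs 1 = ⊤) (h2 : Gs 2 = ⊤) (hbip : ∀ t ∈ Icc 3 T, (Gs t).Colorable 2)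
    (hcover : ∀ u v, Gᶜ.Adj u v → ∃ t ∈ Icc 3 T, (Gs t).Adj u v) :
    ∃ φ, ProperTemporal2Coloring Gs T φ := by
  obtain ⟨c₁, c₂, hc⟩ := colorable_mul_iff (m := 2) (n := 2) |>.1 hG
  have hsep : ∀ t, ∃ χ : V → Fin 2, t ∈ Icc 3 T → ∀ ⦃u v⦄, (Gs t).Adj u v → χ u ≠ χ v := fun t => by
    by_cases ht : t ∈ Icc 3 T
    · obtain ⟨χ⟩ := hbip t ht
      exact ⟨χ, fun _ _ _ => χ.valid⟩
    · exact ⟨fun _ => 0, fun h => absurd h ht⟩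
  choose χ hχ using hsep
  refine ⟨fun v t => if t = 1 then c₁ v else if t = 2 then c₂ v else χ t v, ?_⟩
  rintro u v ⟨t, -, hadj⟩
  by_cases huv : G.Adj u v
  · rcases hc huv with h | h
    · exact ⟨1, by simp; omega, by simp [h1, huv.ne], by simpa using h⟩
    · exact ⟨2, by simp; omega, by simp [h2, huv.ne], by simpa using h⟩
  · obtain ⟨s, hs, hadj'⟩ := hcover u v ⟨hadj.ne, huv⟩
    have hs' := mem_Icc.1 hs
    refine ⟨s, mem_Icc.2 ⟨by omega, hs'.2⟩, hadj', ?_⟩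
    simpa [show s ≠ 1 by omega, show s ≠ 2 by omega] using hχ s hs hadj'

end TemporalColoring

theorem stmt_1_general {V : Type*} [Fintype V]
    (G : SimpleGraph V) [DecidableRel G.Adj]
    (T : ℕ) (hT : T = (Fintype.card V).choose 2 - G.edgeFinset.card + 2)
    (Gs : ℕ → SimpleGraph V) (f : ℕ → Sym2 V)
    (h1 : Gs 1 = ⊤) (h2 : Gs 2 = ⊤)
    (hfmem : ∀ i ∈ Finset.Icc 3 T, f i ∈ Gᶜ.edgeSet)
    (hfsurj : ∀ e ∈ Gᶜ.edgeSet, ∃ i ∈ Finset.Icc 3 T, f i = e)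
    (hGs : ∀ i ∈ Finset.Icc 3 T, Gs i = SimpleGraph.fromEdgeSet {f i}) :
    (∃ φ : V → ℕ → Fin 2, ProperTemporal2Coloring Gs T φ) ↔ G.Colorable 4 := by
  have hT2 : 2 ≤ T := by omega
  have hle : ∀ t ∈ Icc 3 T, Gs t ≤ Gᶜ := fun t ht => by
    rw [hGs t ht]
    exact (fromEdgeSet_mono (Set.singleton_subset_iff.2 (hfmem t ht))).trans_eq
      (fromEdgeSet_edgeSet _)
  have hbip : ∀ t ∈ Icc 3 T, (Gs t).Colorable 2 := fun t ht => by
    rw [hGs t ht]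
    exact colorable_two_fromEdgeSet_singleton _
  have hcover : ∀ u v, Gᶜ.Adj u v → ∃ t ∈ Icc 3 T, (Gs t).Adj u v := fun u v huv => by
    obtain ⟨t, ht, hft⟩ := hfsurj s(u, v) huv
    exact ⟨t, ht, by rw [hGs t ht, fromEdgeSet_adj, hft]; exact ⟨rfl, huv.ne⟩⟩
  exact ⟨fun ⟨φ, hφ⟩ => hφ.colorable_four (by omega) h1 hle,
    fun hG => exists_properTemporal2Coloring_of_colorable_four hG hT2 h1 h2 hbip hcover⟩

/-- the temporal graph whose first two snapshots are `K_n` and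
whose remaining `C(n,2) - |E|` snapshots each consist of exactly one distinct
non-edge of `G` admits a proper temporal 2-coloring iff `G` is 4-colorable. -/
theorem stmt_1 {V : Type*} [Fintype V] [DecidableEq V]
    (G : SimpleGraph V) [DecidableRel G.Adj]
    (T : ℕ) (hT : T = (Fintype.card V).choose 2 - G.edgeFinset.card + 2)
    (Gs : ℕ → SimpleGraph V) (f : ℕ → Sym2 V)
    (h1 : Gs 1 = ⊤) (h2 : Gs 2 = ⊤)
    (hfmem : ∀ i ∈ Finset.Icc 3 T, f i ∈ Gᶜ.edgeSet)
    (hfinj : Set.InjOn f ↑(Finset.Icc 3 T))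
    (hfsurj : ∀ e ∈ Gᶜ.edgeSet, ∃ i ∈ Finset.Icc 3 T, f i = e)
    (hGs : ∀ i ∈ Finset.Icc 3 T, Gs i = SimpleGraph.fromEdgeSet {f i}) :
    (∃ φ : V → ℕ → Fin 2, ProperTemporal2Coloring Gs T φ) ↔ G.Colorable 4 :=
  stmt_1_general G T hT Gs f h1 h2 hfmem hfsurj hGs
end

section
/- Let (G,λ) be a temporal graph with lifetime T and let m = |E(G)|. Then there exists a set S ⊆ [T] of time slots with |S| ≤ m such that, for every integer k ≥ 2, the temporal graph (G,λ) admits a proper temporal k-coloring if and only if the restriction (G,λ)|_S admits a proper temporal k-coloring. -/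
/-- A proper temporal `k`-coloring of the temporal graph with snapshots `Gs`,
restricted to the set `S` of time slots: every edge appearing in some snapshot
with time slot in `S` is properly colored at some time slot in `S` at which it
is active. -/
def ProperTemporalColoringOn {V : Type*} {k : ℕ} (Gs : ℕ → SimpleGraph V)
    (S : Finset ℕ) (φ : V → ℕ → Fin k) : Prop :=
  ∀ u v : V, (∃ t ∈ S, (Gs t).Adj u v) →
    ∃ t ∈ S, (Gs t).Adj u v ∧ φ u t ≠ φ v t

/-- there is a set `S ⊆ [T]` of at most `m = |E(G)|` time slots
such that for every `k ≥ 2`, `(G,λ)` admits a proper temporal `k`-coloring iff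
its restriction to `S` does. -/
theorem stmt_2 {V : Type*} [Fintype V] (Gs : ℕ → SimpleGraph V) (T : ℕ) :
    ∃ S ⊆ Finset.Icc 1 T,
      S.card ≤ ((⨆ t ∈ Finset.Icc 1 T, Gs t).edgeSet).ncard ∧
      ∀ k : ℕ, 2 ≤ k →
        ((∃ φ : V → ℕ → Fin k, ProperTemporalColoringOn Gs (Finset.Icc 1 T) φ) ↔
          (∃ φ : V → ℕ → Fin k, ProperTemporalColoringOn Gs S φ)) := by
  classical
  set Gu := ⨆ t ∈ Finset.Icc 1 T, Gs t with hGudef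
  have hGuAdj : ∀ u v : V, Gu.Adj u v ↔ ∃ t ∈ Finset.Icc 1 T, (Gs t).Adj u v := by
    intro u v
    simp [hGudef, SimpleGraph.iSup_adj]
  -- the predicate "there is a full proper temporal k-coloring"
  have hP : ∃ k, 2 ≤ k ∧ ∃ φ : V → ℕ → Fin k,
      ProperTemporalColoringOn Gs (Finset.Icc 1 T) φ := by
    refine ⟨Fintype.card V + 2, by omega, fun u _ => Fin.castLE (by omega) (Fintype.equivFin V u), ?_⟩
    rintro u v ⟨t, ht, hadj⟩
    refine ⟨t, ht, hadj, fun hc => hadj.ne ?_⟩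
    exact (Fintype.equivFin V).injective (Fin.castLE_injective _ hc)
  set k0 := Nat.find hP with hk0def
  obtain ⟨hk02, φ0, hφ0⟩ := Nat.find_spec hP
  -- for each edge of the union graph, pick a time slot witnessing proper coloring
  have key : ∀ e ∈ Gu.edgeSet, ∃ t, t ∈ Finset.Icc 1 T ∧ e ∈ (Gs t).edgeSet ∧
      ∀ a b : V, e = s(a, b) → φ0 a t ≠ φ0 b t := by
    intro e he
    induction e using Sym2.ind with
    | _ u v =>
      rw [SimpleGraph.mem_edgeSet, hGuAdj] at he
      obtain ⟨t, ht, hadj, hne⟩ := hφ0 u v he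
      refine ⟨t, ht, hadj, ?_⟩
      intro a b hab
      rw [Sym2.eq_iff] at hab
      rcases hab with ⟨rfl, rfl⟩ | ⟨rfl, rfl⟩
      · exact hne
      · exact hne.symm
  let w : Sym2 V → ℕ := fun e => if h : e ∈ Gu.edgeSet then (key e h).choose else 0
  have hw : ∀ e (h : e ∈ Gu.edgeSet), w e ∈ Finset.Icc 1 T ∧ e ∈ (Gs (w e)).edgeSet ∧
      ∀ a b : V, e = s(a, b) → φ0 a (w e) ≠ φ0 b (w e) := by
    intro e h
    have := (key e h).choose_spec
    simpa [w, h] using this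
  have hfin : Gu.edgeSet.Finite := Set.toFinite _
  refine ⟨hfin.toFinset.image w, ?_, ?_, ?_⟩
  · -- S ⊆ Icc 1 T
    intro s hs
    simp only [Finset.mem_image, Set.Finite.mem_toFinset] at hs
    obtain ⟨e, he, rfl⟩ := hs
    exact (hw e he).1
  · -- card bound
    calc (hfin.toFinset.image w).card ≤ hfin.toFinset.card := Finset.card_image_le
      _ = Gu.edgeSet.ncard := (Set.ncard_eq_toFinset_card _ hfin).symm
  · intro k hk
    constructor
    · -- full ⇒ restricted
      rintro ⟨φ, hφ⟩
      have hk0le : k0 ≤ k := Nat.find_min' hP ⟨hk, φ, hφ⟩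
      refine ⟨fun u t => Fin.castLE hk0le (φ0 u t), ?_⟩
      rintro u v ⟨t, ht, hadj⟩
      have htIcc : t ∈ Finset.Icc 1 T := by
        have := ht
        simp only [Finset.mem_image, Set.Finite.mem_toFinset] at this
        obtain ⟨e, he, rfl⟩ := this
        exact (hw e he).1
      have hGuadj : Gu.Adj u v := (hGuAdj u v).mpr ⟨t, htIcc, hadj⟩
      have heMem : s(u, v) ∈ Gu.edgeSet := hGuadj
      obtain ⟨h1, h2, h3⟩ := hw _ heMem
      refine ⟨w s(u, v), ?_, h2, ?_⟩
      · simp only [Finset.mem_image, Set.Finite.mem_toFinset]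
        exact ⟨s(u, v), heMem, rfl⟩
      · intro hc
        exact h3 u v rfl (Fin.castLE_injective _ hc)
    · -- restricted ⇒ full
      rintro ⟨ψ, hψ⟩
      refine ⟨ψ, ?_⟩
      rintro u v ⟨t, ht, hadj⟩
      have hGuadj : Gu.Adj u v := (hGuAdj u v).mpr ⟨t, ht, hadj⟩
      have heMem : s(u, v) ∈ Gu.edgeSet := hGuadj
      obtain ⟨h1, h2, _⟩ := hw _ heMem
      have hwS : w s(u, v) ∈ hfin.toFinset.image w := by
        simp only [Finset.mem_image, Set.Finite.mem_toFinset]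
        exact ⟨s(u, v), heMem, rfl⟩
      obtain ⟨t', ht', hadj', hne'⟩ := hψ u v ⟨w s(u, v), hwS, h2⟩
      have ht'Icc : t' ∈ Finset.Icc 1 T := by
        simp only [Finset.mem_image, Set.Finite.mem_toFinset] at ht'
        obtain ⟨e, he, rfl⟩ := ht'
        exact (hw e he).1
      exact ⟨t', ht'Icc, hadj', hne'⟩
end

section
/- Let (G,λ) be a temporal graph with lifetime T, and let B be the bipartite graph with vertex parts E = E(G) and [T] in which e ∈ E is adjacent to t ∈ [T] if and only if t ∈ λ(e). Let M be a maximum matching of B and let S ⊆ [T] be the set of time slots covered by M. Then, for every integer k ≥ 2, (G,λ) admits a proper temporal k-coloring if and only if the restriction (G,λ)|_S admits a proper temporal k-coloring. -/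
/-- let `M` be a maximum matching of the bipartite graph `B`
between the edges of the underlying graph and the time slots `[1,T]`, where an
edge `e` is adjacent to slot `t` iff `e` is active at `t`.  (A matching is
modeled as a finite set of (edge, slot) pairs whose edges are pairwise distinct
and whose slots are pairwise distinct, each pair being an edge of `B`.)
Let `S` be the set of time slots covered by `M`.  Then for every `k ≥ 2`,
`(G,λ)` admits a proper temporal `k`-coloring iff its restriction to `S` does. -/
theorem stmt_3 {V : Type*} [Fintype V] (Gs : ℕ → SimpleGraph V) (T : ℕ)
    (M : Finset (Sym2 V × ℕ))
    (hM : ∀ p ∈ M, p.2 ∈ Finset.Icc 1 T ∧ p.1 ∈ (Gs p.2).edgeSet)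
    (hMatching : ∀ p ∈ M, ∀ q ∈ M, p ≠ q → p.1 ≠ q.1 ∧ p.2 ≠ q.2)
    (hMaximum : ∀ M' : Finset (Sym2 V × ℕ),
      (∀ p ∈ M', p.2 ∈ Finset.Icc 1 T ∧ p.1 ∈ (Gs p.2).edgeSet) →
      (∀ p ∈ M', ∀ q ∈ M', p ≠ q → p.1 ≠ q.1 ∧ p.2 ≠ q.2) →
      M'.card ≤ M.card)
    (k : ℕ) (hk : 2 ≤ k) :
    (∃ φ : V → ℕ → Fin k, ProperTemporalColoringOn Gs (Finset.Icc 1 T) φ) ↔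
      (∃ φ : V → ℕ → Fin k,
        ProperTemporalColoringOn Gs (M.image Prod.snd) φ) := by
  classical
  -- uniqueness of pairs in a matching sharing a coordinate
  have uniq : ∀ (N : Finset (Sym2 V × ℕ)),
      (∀ p ∈ N, ∀ q ∈ N, p ≠ q → p.1 ≠ q.1 ∧ p.2 ≠ q.2) →
      ∀ p ∈ N, ∀ q ∈ N, (p.1 = q.1 ∨ p.2 = q.2) → p = q := by
    intro N hN p hp q hq h
    by_contra hne
    rcases hN p hp q hq hne with ⟨h1, h2⟩
    rcases h with h | h
    · exact h1 h
    · exact h2 h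
  -- if an active pair (e,t) has both coordinates uncovered by a maximum-size matching,
  -- we get a contradiction by inserting it
  have extend : ∀ (N : Finset (Sym2 V × ℕ)),
      (∀ p ∈ N, p.2 ∈ Finset.Icc 1 T ∧ p.1 ∈ (Gs p.2).edgeSet) →
      (∀ p ∈ N, ∀ q ∈ N, p ≠ q → p.1 ≠ q.1 ∧ p.2 ≠ q.2) →
      N.card = M.card →
      ∀ (e : Sym2 V) (t : ℕ), t ∈ Finset.Icc 1 T → e ∈ (Gs t).edgeSet →
      e ∉ N.image Prod.fst → t ∉ N.image Prod.snd → False := by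
    intro N hval hmatch hcard e t ht he hef hes
    have hnotmem : (e, t) ∉ N := fun h => hef (Finset.mem_image_of_mem _ h)
    have hval' : ∀ p ∈ insert (e,t) N, p.2 ∈ Finset.Icc 1 T ∧ p.1 ∈ (Gs p.2).edgeSet := by
      intro p hp
      rcases Finset.mem_insert.mp hp with rfl | hp
      · exact ⟨ht, he⟩
      · exact hval p hp
    have hmatch' : ∀ p ∈ insert (e,t) N, ∀ q ∈ insert (e,t) N,
        p ≠ q → p.1 ≠ q.1 ∧ p.2 ≠ q.2 := by
      intro p hp q hq hne
      rcases Finset.mem_insert.mp hp with rfl | hp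
      · rcases Finset.mem_insert.mp hq with rfl | hq
        · exact absurd rfl hne
        · exact ⟨fun h => hef (Finset.mem_image.mpr ⟨q, hq, h.symm⟩),
            fun h => hes (Finset.mem_image.mpr ⟨q, hq, h.symm⟩)⟩
      · rcases Finset.mem_insert.mp hq with rfl | hq
        · exact ⟨fun h => hef (Finset.mem_image.mpr ⟨p, hp, h⟩),
            fun h => hes (Finset.mem_image.mpr ⟨p, hp, h⟩)⟩
        · exact hmatch p hp q hq hne
    have hc := hMaximum (insert (e,t) N) hval' hmatch'
    rw [Finset.card_insert_of_notMem hnotmem, hcard] at hc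
    omega
  -- every edge active somewhere in [1,T] is active at some slot of S
  have hS_active : ∀ u v : V, (∃ t ∈ Finset.Icc 1 T, (Gs t).Adj u v) →
      ∃ s ∈ M.image Prod.snd, (Gs s).Adj u v := by
    rintro u v ⟨t, ht, hadj⟩
    by_cases hef : s(u,v) ∈ M.image Prod.fst
    · obtain ⟨p, hp, hp1⟩ := Finset.mem_image.mp hef
      refine ⟨p.2, Finset.mem_image_of_mem _ hp, ?_⟩
      have h2 := (hM p hp).2
      rw [hp1] at h2
      exact (SimpleGraph.mem_edgeSet _).mp h2
    · by_cases hes : t ∈ M.image Prod.snd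
      · exact ⟨t, hes, hadj⟩
      · exact absurd (extend M hM hMatching rfl s(u,v) t ht
          ((SimpleGraph.mem_edgeSet _).mpr hadj) hef hes) (fun h => h)
  have hSsub : ∀ s ∈ M.image Prod.snd, s ∈ Finset.Icc 1 T := by
    intro s hs
    obtain ⟨p, hp, hp2⟩ := Finset.mem_image.mp hs
    exact hp2 ▸ (hM p hp).1
  constructor
  · -- hard direction
    rintro ⟨φ, hφ⟩
    -- choose for each active edge a time slot where it is properly colored
    have hwex : ∀ e : Sym2 V, (∃ t ∈ Finset.Icc 1 T, e ∈ (Gs t).edgeSet) →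
        ∃ t, t ∈ Finset.Icc 1 T ∧ e ∈ (Gs t).edgeSet ∧
          ∀ a b : V, e = s(a,b) → φ a t ≠ φ b t := by
      intro e
      induction e using Sym2.ind with
      | _ u v =>
        rintro ⟨t, ht, hadj⟩
        rw [SimpleGraph.mem_edgeSet] at hadj
        obtain ⟨t', ht', hadj', hne⟩ := hφ u v ⟨t, ht, hadj⟩
        refine ⟨t', ht', (SimpleGraph.mem_edgeSet _).mpr hadj', ?_⟩
        intro a b hab
        rcases Sym2.eq_iff.mp hab with ⟨rfl, rfl⟩ | ⟨rfl, rfl⟩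
        · exact hne
        · exact hne.symm
    obtain ⟨w, hw⟩ : ∃ w : Sym2 V → ℕ, ∀ e : Sym2 V,
        (∃ t ∈ Finset.Icc 1 T, e ∈ (Gs t).edgeSet) →
        w e ∈ Finset.Icc 1 T ∧ e ∈ (Gs (w e)).edgeSet ∧
          ∀ a b : V, e = s(a,b) → φ a (w e) ≠ φ b (w e) := by
      refine ⟨fun e => if h : ∃ t ∈ Finset.Icc 1 T, e ∈ (Gs t).edgeSet
        then (hwex e h).choose else 0, ?_⟩
      intro e he
      simp only [dif_pos he]
      exact (hwex e he).choose_spec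
    -- pick, among matchings of the same size covering the same slots, one maximizing
    -- the number of pairs (e,s) with w e = s
    obtain ⟨N, hNval, hNmatch, hNcard, hNsnd, hNmax⟩ :
        ∃ N : Finset (Sym2 V × ℕ),
          (∀ p ∈ N, p.2 ∈ Finset.Icc 1 T ∧ p.1 ∈ (Gs p.2).edgeSet) ∧
          (∀ p ∈ N, ∀ q ∈ N, p ≠ q → p.1 ≠ q.1 ∧ p.2 ≠ q.2) ∧
          N.card = M.card ∧ N.image Prod.snd = M.image Prod.snd ∧
          ∀ N' : Finset (Sym2 V × ℕ),
            (∀ p ∈ N', p.2 ∈ Finset.Icc 1 T ∧ p.1 ∈ (Gs p.2).edgeSet) →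
            (∀ p ∈ N', ∀ q ∈ N', p ≠ q → p.1 ≠ q.1 ∧ p.2 ≠ q.2) →
            N'.card = M.card → N'.image Prod.snd = M.image Prod.snd →
            (N'.filter (fun p => w p.1 = p.2)).card ≤
              (N.filter (fun p => w p.1 = p.2)).card := by
      letI : DecidableEq V := Classical.decEq V
      set U : Finset (Sym2 V × ℕ) := Finset.univ ×ˢ Finset.Icc 1 T with hU
      set C : Finset (Finset (Sym2 V × ℕ)) := U.powerset.filter (fun N =>
        (∀ p ∈ N, p.2 ∈ Finset.Icc 1 T ∧ p.1 ∈ (Gs p.2).edgeSet) ∧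
        (∀ p ∈ N, ∀ q ∈ N, p ≠ q → p.1 ≠ q.1 ∧ p.2 ≠ q.2) ∧
        N.card = M.card ∧ N.image Prod.snd = M.image Prod.snd) with hC
      have hmemC : ∀ N : Finset (Sym2 V × ℕ),
          N ∈ C ↔ ((∀ p ∈ N, p.2 ∈ Finset.Icc 1 T ∧ p.1 ∈ (Gs p.2).edgeSet) ∧
          (∀ p ∈ N, ∀ q ∈ N, p ≠ q → p.1 ≠ q.1 ∧ p.2 ≠ q.2) ∧
          N.card = M.card ∧ N.image Prod.snd = M.image Prod.snd) := by
        intro N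
        rw [hC, Finset.mem_filter, Finset.mem_powerset]
        constructor
        · exact fun h => h.2
        · intro h
          refine ⟨?_, h⟩
          intro p hp
          rw [hU, Finset.mem_product]
          exact ⟨Finset.mem_univ _, (h.1 p hp).1⟩
      have hMC : M ∈ C := (hmemC M).mpr ⟨hM, hMatching, rfl, rfl⟩
      obtain ⟨N, hNC, hNmax⟩ := C.exists_max_image
        (fun N => (N.filter (fun p => w p.1 = p.2)).card) ⟨M, hMC⟩
      obtain ⟨h1, h2, h3, h4⟩ := (hmemC N).mp hNC
      exact ⟨N, h1, h2, h3, h4, fun N' a b c d => hNmax N' ((hmemC N').mpr ⟨a, b, c, d⟩)⟩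
    -- key claim: every active unmatched edge e has a matched pair p with
    -- p.2 = w e and w p.1 = w e
    have hserve : ∀ e : Sym2 V, (∃ t ∈ Finset.Icc 1 T, e ∈ (Gs t).edgeSet) →
        e ∉ N.image Prod.fst → ∃ p ∈ N, p.2 = w e ∧ w p.1 = w e := by
      intro e he hef
      obtain ⟨hwIcc, hwedge, -⟩ := hw e he
      have hws : w e ∈ N.image Prod.snd := by
        by_contra hws
        exact extend N hNval hNmatch hNcard e (w e) hwIcc hwedge hef hws
      obtain ⟨p, hp, hp2⟩ := Finset.mem_image.mp hws
      by_cases hwp : w p.1 = w e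
      · exact ⟨p, hp, hp2, hwp⟩
      exfalso
      have hfne : ∀ r ∈ N, r.1 ≠ e := fun r hr h =>
        hef (Finset.mem_image.mpr ⟨r, hr, h⟩)
      have he1act : ∃ t ∈ Finset.Icc 1 T, p.1 ∈ (Gs t).edgeSet :=
        ⟨p.2, (hNval p hp).1, (hNval p hp).2⟩
      obtain ⟨ht1Icc, ht1edge, -⟩ := hw p.1 he1act
      have ht1ne : w p.1 ≠ p.2 := by
        rw [hp2]; exact hwp
      have hpt1N : (p.1, w p.1) ∉ N := by
        intro h
        exact ht1ne (congrArg Prod.snd (uniq N hNmatch (p.1, w p.1) h p hp (Or.inl rfl)))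
      -- pairs of N other than p avoid slot w e and edge p.1 ; other than q avoid slot w p.1
      have hA : ∀ r ∈ N, r ≠ p → r.2 ≠ w e := by
        intro r hr hrp h
        exact hrp (uniq N hNmatch r hr p hp (Or.inr (h.trans hp2.symm)))
      have hB : ∀ r ∈ N, r ≠ p → r.1 ≠ p.1 := by
        intro r hr hrp h
        exact hrp (uniq N hNmatch r hr p hp (Or.inl h))
      by_cases ht1s : w p.1 ∈ N.image Prod.snd
      · -- double swap, improving the count: contradiction with hNmax
        obtain ⟨q, hq, hq2⟩ := Finset.mem_image.mp ht1s
        have hqp : q ≠ p := by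
          intro h
          rw [h] at hq2
          exact ht1ne hq2.symm
        have hC : ∀ r ∈ N, r ≠ q → r.2 ≠ w p.1 := by
          intro r hr hrq h
          exact hrq (uniq N hNmatch r hr q hq (Or.inr (h.trans hq2.symm)))
        have hqinerase : q ∈ N.erase p := Finset.mem_erase.mpr ⟨hqp, hq⟩
        set D : Finset (Sym2 V × ℕ) := (N.erase p).erase q with hD
        have hmemD : ∀ r, r ∈ D ↔ r ∈ N ∧ r ≠ p ∧ r ≠ q := by
          intro r
          rw [hD, Finset.mem_erase, Finset.mem_erase]
          tauto
        have hDsub : ∀ r ∈ D, r ∈ N := fun r hr => ((hmemD r).mp hr).1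
        set N' : Finset (Sym2 V × ℕ) := insert (e, w e) (insert (p.1, w p.1) D) with hN'
        have hmemN' : ∀ r, r ∈ N' ↔
            r = (e, w e) ∨ r = (p.1, w p.1) ∨ (r ∈ N ∧ r ≠ p ∧ r ≠ q) := by
          intro r
          rw [hN', Finset.mem_insert, Finset.mem_insert, hmemD]
        have hewe : (e, w e) ∉ N := fun h => hfne _ h rfl
        have hne12 : ((e, w e) : Sym2 V × ℕ) ≠ (p.1, w p.1) := by
          intro h
          exact hfne p hp (congrArg Prod.fst h).symm
        have hwewp1 : w e ≠ w p.1 := fun h => hwp h.symm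
        have hval' : ∀ r ∈ N', r.2 ∈ Finset.Icc 1 T ∧ r.1 ∈ (Gs r.2).edgeSet := by
          intro r hr
          rcases (hmemN' r).mp hr with rfl | rfl | ⟨hrN, -, -⟩
          · exact ⟨hwIcc, hwedge⟩
          · exact ⟨ht1Icc, ht1edge⟩
          · exact hNval r hrN
        have hmatch' : ∀ r ∈ N', ∀ r' ∈ N', r ≠ r' → r.1 ≠ r'.1 ∧ r.2 ≠ r'.2 := by
          intro r hr r' hr' hne
          rcases (hmemN' r).mp hr with rfl | rfl | ⟨hrN, hrp, hrq⟩
          · rcases (hmemN' r').mp hr' with rfl | rfl | ⟨hrN', hrp', hrq'⟩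
            · exact absurd rfl hne
            · exact ⟨fun h => hfne p hp h.symm, hwewp1⟩
            · exact ⟨fun h => hfne r' hrN' h.symm, fun h => hA r' hrN' hrp' h.symm⟩
          · rcases (hmemN' r').mp hr' with rfl | rfl | ⟨hrN', hrp', hrq'⟩
            · exact ⟨fun h => hfne p hp h, hwewp1.symm⟩
            · exact absurd rfl hne
            · exact ⟨fun h => hB r' hrN' hrp' h.symm, fun h => hC r' hrN' hrq' h.symm⟩
          · rcases (hmemN' r').mp hr' with rfl | rfl | ⟨hrN', hrp', hrq'⟩
            · exact ⟨hfne r hrN, hA r hrN hrp⟩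
            · exact ⟨hB r hrN hrp, hC r hrN hrq⟩
            · exact hNmatch r hrN r' hrN' hne
        -- cardinality
        have hpt1D : (p.1, w p.1) ∉ D := fun h => hpt1N (hDsub _ h)
        have heweiD : (e, w e) ∉ insert (p.1, w p.1) D := by
          intro h
          rcases Finset.mem_insert.mp h with h | h
          · exact hne12 h
          · exact hewe (hDsub _ h)
        have hcardD : D.card = N.card - 2 := by
          rw [hD, Finset.card_erase_of_mem hqinerase, Finset.card_erase_of_mem hp]
          omega
        have h2le : 2 ≤ N.card := by
          have : 1 < N.card := Finset.one_lt_card.mpr ⟨p, hp, q, hq, hqp.symm⟩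
          omega
        have hcard' : N'.card = M.card := by
          rw [hN', Finset.card_insert_of_notMem heweiD,
            Finset.card_insert_of_notMem hpt1D, hcardD]
          omega
        -- covered slots unchanged
        have hsnd' : N'.image Prod.snd = M.image Prod.snd := by
          rw [← hNsnd]
          apply Finset.ext
          intro s
          constructor
          · intro hs
            obtain ⟨r, hr, hr2⟩ := Finset.mem_image.mp hs
            rcases (hmemN' r).mp hr with rfl | rfl | ⟨hrN, -, -⟩
            · exact Finset.mem_image.mpr ⟨p, hp, hp2.trans hr2⟩
            · exact Finset.mem_image.mpr ⟨q, hq, hq2.trans hr2⟩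
            · exact Finset.mem_image.mpr ⟨r, hrN, hr2⟩
          · intro hs
            obtain ⟨r, hr, hr2⟩ := Finset.mem_image.mp hs
            by_cases hrp : r = p
            · refine Finset.mem_image.mpr ⟨(e, w e), (hmemN' _).mpr (Or.inl rfl), ?_⟩
              rw [← hp2, ← hrp, hr2]
            · by_cases hrq : r = q
              · refine Finset.mem_image.mpr ⟨(p.1, w p.1), (hmemN' _).mpr (Or.inr (Or.inl rfl)), ?_⟩
                rw [← hq2, ← hrq, hr2]
              · exact Finset.mem_image.mpr ⟨r, (hmemN' r).mpr (Or.inr (Or.inr ⟨hr, hrp, hrq⟩)), hr2⟩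
        -- the count strictly increases : contradiction
        have hNdecomp : N = insert p (insert q D) := by
          rw [hD, Finset.insert_erase hqinerase, Finset.insert_erase hp]
        have hfiltN : (N.filter (fun r => w r.1 = r.2)).card ≤
            (D.filter (fun r => w r.1 = r.2)).card + 1 := by
          conv_lhs => rw [hNdecomp]
          rw [Finset.filter_insert, if_neg ht1ne, Finset.filter_insert]
          by_cases hFq : w q.1 = q.2
          · rw [if_pos hFq]
            exact Finset.card_insert_le _ _
          · rw [if_neg hFq]
            omega
        have hfiltN' : (N'.filter (fun r => w r.1 = r.2)).card =
            (D.filter (fun r => w r.1 = r.2)).card + 2 := by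
          rw [hN', Finset.filter_insert, if_pos rfl, Finset.filter_insert, if_pos rfl]
          rw [Finset.card_insert_of_notMem, Finset.card_insert_of_notMem]
          · intro h
            exact hpt1D (Finset.mem_of_mem_filter _ h)
          · intro h
            rcases Finset.mem_insert.mp h with h | h
            · exact hne12 h
            · exact hewe (hDsub _ (Finset.mem_of_mem_filter _ h))
        have := hNmax N' hval' hmatch' hcard' hsnd'
        omega
      · -- single swap then extend : contradiction with maximality of size
        set N'' : Finset (Sym2 V × ℕ) := insert (p.1, w p.1) (N.erase p) with hN''
        have hmemN'' : ∀ r, r ∈ N'' ↔ r = (p.1, w p.1) ∨ (r ∈ N ∧ r ≠ p) := by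
          intro r
          rw [hN'', Finset.mem_insert, Finset.mem_erase]
          tauto
        have hval'' : ∀ r ∈ N'', r.2 ∈ Finset.Icc 1 T ∧ r.1 ∈ (Gs r.2).edgeSet := by
          intro r hr
          rcases (hmemN'' r).mp hr with rfl | ⟨hrN, -⟩
          · exact ⟨ht1Icc, ht1edge⟩
          · exact hNval r hrN
        have hmatch'' : ∀ r ∈ N'', ∀ r' ∈ N'', r ≠ r' → r.1 ≠ r'.1 ∧ r.2 ≠ r'.2 := by
          intro r hr r' hr' hne
          rcases (hmemN'' r).mp hr with rfl | ⟨hrN, hrp⟩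
          · rcases (hmemN'' r').mp hr' with rfl | ⟨hrN', hrp'⟩
            · exact absurd rfl hne
            · exact ⟨fun h => hB r' hrN' hrp' h.symm,
                fun h => ht1s (Finset.mem_image.mpr ⟨r', hrN', h.symm⟩)⟩
          · rcases (hmemN'' r').mp hr' with rfl | ⟨hrN', hrp'⟩
            · exact ⟨hB r hrN hrp, fun h => ht1s (Finset.mem_image.mpr ⟨r, hrN, h⟩)⟩
            · exact hNmatch r hrN r' hrN' hne
        have hpt1erase : (p.1, w p.1) ∉ N.erase p := fun h =>
          hpt1N (Finset.mem_of_mem_erase h)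
        have hcard'' : N''.card = M.card := by
          rw [hN'', Finset.card_insert_of_notMem hpt1erase,
            Finset.card_erase_of_mem hp]
          have : 1 ≤ N.card := Finset.card_pos.mpr ⟨p, hp⟩
          omega
        have hef'' : e ∉ N''.image Prod.fst := by
          intro h
          obtain ⟨r, hr, hr1⟩ := Finset.mem_image.mp h
          rcases (hmemN'' r).mp hr with rfl | ⟨hrN, -⟩
          · exact hfne p hp hr1
          · exact hfne r hrN hr1
        have hes'' : p.2 ∉ N''.image Prod.snd := by
          intro h
          obtain ⟨r, hr, hr2⟩ := Finset.mem_image.mp h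
          rcases (hmemN'' r).mp hr with rfl | ⟨hrN, hrp⟩
          · exact ht1ne hr2
          · exact hrp (uniq N hNmatch r hrN p hp (Or.inr hr2))
        have hedge2 : e ∈ (Gs p.2).edgeSet := by
          rw [hp2]; exact hwedge
        exact extend N'' hval'' hmatch'' hcard'' e p.2 (hNval p hp).1 hedge2 hef'' hes''
    -- define the new coloring on the covered slots
    obtain ⟨τ, hτ⟩ : ∃ τ : ℕ → ℕ, ∀ p ∈ N, τ p.2 = w p.1 := by
      refine ⟨fun s => if h : ∃ r, r ∈ N ∧ r.2 = s then w h.choose.1 else 0, ?_⟩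
      intro p hp
      have hex : ∃ r, r ∈ N ∧ r.2 = p.2 := ⟨p, hp, rfl⟩
      simp only [dif_pos hex]
      have hcs := hex.choose_spec
      rw [uniq N hNmatch _ hcs.1 p hp (Or.inr hcs.2)]
    refine ⟨fun v s => φ v (τ s), ?_⟩
    intro u v huv
    obtain ⟨s₀, hs₀, hadj₀⟩ := huv
    have hact : ∃ t ∈ Finset.Icc 1 T, s(u,v) ∈ (Gs t).edgeSet :=
      ⟨s₀, hSsub s₀ hs₀, (SimpleGraph.mem_edgeSet _).mpr hadj₀⟩
    obtain ⟨hwIcc, hwedge, hwsep⟩ := hw s(u,v) hact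
    by_cases hef : s(u,v) ∈ N.image Prod.fst
    · obtain ⟨p, hp, hp1⟩ := Finset.mem_image.mp hef
      refine ⟨p.2, ?_, ?_, ?_⟩
      · rw [← hNsnd]
        exact Finset.mem_image_of_mem _ hp
      · have h2 := (hNval p hp).2
        rw [hp1] at h2
        exact (SimpleGraph.mem_edgeSet _).mp h2
      · show φ u (τ p.2) ≠ φ v (τ p.2)
        have hτp : τ p.2 = w s(u,v) := by rw [hτ p hp, hp1]
        rw [hτp]
        exact hwsep u v rfl
    · obtain ⟨p, hp, hp2, hwp⟩ := hserve s(u,v) hact hef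
      refine ⟨w s(u,v), ?_, (SimpleGraph.mem_edgeSet _).mp hwedge, ?_⟩
      · rw [← hNsnd]
        exact Finset.mem_image.mpr ⟨p, hp, hp2⟩
      · show φ u (τ (w s(u,v))) ≠ φ v (τ (w s(u,v)))
        have hτp : τ (w s(u,v)) = w s(u,v) := by
          rw [← hp2, hτ p hp]
          exact hwp.trans hp2.symm
        rw [hτp]
        exact hwsep u v rfl
  · -- easy direction
    rintro ⟨ψ, hψ⟩
    refine ⟨ψ, ?_⟩
    intro u v hex
    obtain ⟨s, hs, hadj⟩ := hS_active u v hex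
    obtain ⟨t', ht', hadj', hne⟩ := hψ u v ⟨s, hs, hadj⟩
    exact ⟨t', hSsub t' ht', hadj', hne⟩
end

section
/- Let (G,λ) = (G₁, G₂, …, G_T) be a temporal graph, let Δ ≥ 1 with Δ ≤ T, and let k ≥ 1. Let (G',λ') be the temporal graph obtained from (G,λ) by inserting one trivial (edgeless) snapshot after every Δ consecutive snapshots of (G,λ). Then (G,λ) admits a proper sliding Δ-window temporal k-coloring if and only if (G',λ') admits a proper sliding (Δ+1)-window temporal k-coloring. -/
/-- map from original slot `j` to new slot -/
def SWg (Δ j : ℕ) : ℕ := j + (j - 1) / Δ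

lemma SWg_mono (Δ : ℕ) {a b : ℕ} (h : a ≤ b) : SWg Δ a ≤ SWg Δ b :=
  Nat.add_le_add h (Nat.div_le_div_right (Nat.sub_le_sub_right h 1))

lemma SWg_strict (Δ : ℕ) {a b : ℕ} (h : a < b) : SWg Δ a < SWg Δ b :=
  Nat.add_lt_add_of_lt_of_le h (Nat.div_le_div_right (Nat.sub_le_sub_right (le_of_lt h) 1))

lemma SWg_calc {Δ b : ℕ} (p : ℕ) (hΔ : 1 ≤ Δ) (hb1 : 1 ≤ b) (hbΔ : b ≤ Δ) :
    SWg Δ (p * Δ + b) = p * Δ + b + p := by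
  have hc : Δ * p = p * Δ := Nat.mul_comm _ _
  have h1 : p * Δ + b - 1 = Δ * p + (b - 1) := by omega
  unfold SWg
  rw [h1, Nat.mul_add_div hΔ, Nat.div_eq_of_lt (by omega)]
  omega

lemma SWg_mul {Δ : ℕ} (p : ℕ) (hΔ : 1 ≤ Δ) :
    SWg Δ (p * Δ) = p * Δ + p - 1 := by
  rcases Nat.eq_zero_or_pos p with h | h
  · subst h; simp [SWg]
  · obtain ⟨p', rfl⟩ : ∃ p', p = p' + 1 := ⟨p - 1, by omega⟩
    have e1 : (p' + 1) * Δ = p' * Δ + Δ := by ring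
    rw [show (p' + 1) * Δ = p' * Δ + Δ from e1, SWg_calc p' hΔ hΔ le_rfl]
    omega

lemma SWg_inv {Δ i : ℕ} (hΔ : 1 ≤ Δ) (hi : ¬ (Δ + 1) ∣ i) :
    SWg Δ (i - i / (Δ + 1)) = i ∧ 1 ≤ i - i / (Δ + 1) := by
  have h0 : 0 < Δ + 1 := by omega
  have hd := Nat.div_add_mod i (Δ + 1)
  have hm : i % (Δ + 1) < Δ + 1 := Nat.mod_lt _ h0
  have hr0 : i % (Δ + 1) ≠ 0 := fun h => hi (Nat.dvd_of_mod_eq_zero h)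
  set q := i / (Δ + 1) with hq
  set r := i % (Δ + 1) with hr
  have he : (Δ + 1) * q = q * Δ + q := by ring
  have hfi : i - q = q * Δ + r := by omega
  refine ⟨?_, by omega⟩
  rw [hfi, SWg_calc q hΔ (by omega) (by omega)]
  omega

lemma SWf_inv {Δ j : ℕ} (hΔ : 1 ≤ Δ) (hj : 1 ≤ j) :
    ¬ (Δ + 1) ∣ SWg Δ j ∧ SWg Δ j - (SWg Δ j) / (Δ + 1) = j := by
  have h0 : 0 < Δ + 1 := by omega
  have hd := Nat.div_add_mod (j - 1) Δ
  have hm : (j - 1) % Δ < Δ := Nat.mod_lt _ (by omega)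
  set p := (j - 1) / Δ with hp
  set ρ := (j - 1) % Δ with hρ
  have he : Δ * p = p * Δ := Nat.mul_comm _ _
  have hjj : j = p * Δ + (ρ + 1) := by omega
  have hg : SWg Δ j = p * Δ + (ρ + 1) + p := by rw [hjj, SWg_calc p hΔ (by omega) (by omega)]
  have he2 : (Δ + 1) * p = p * Δ + p := by ring
  have hdiv : (SWg Δ j) / (Δ + 1) = p := by
    rw [hg, show p * Δ + (ρ + 1) + p = (Δ + 1) * p + (ρ + 1) from by omega,
      Nat.mul_add_div h0, Nat.div_eq_of_lt (by omega)]
    omega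
  constructor
  · intro hdvd
    have : (Δ + 1) ∣ (ρ + 1) := by
      have : SWg Δ j = (Δ + 1) * p + (ρ + 1) := by omega
      rw [this] at hdvd
      exact (Nat.dvd_add_right ⟨p, rfl⟩).mp hdvd
    have := Nat.le_of_dvd (by omega) this
    omega
  · rw [hdiv]; omega

lemma SWg_shift {Δ s : ℕ} (hΔ : 1 ≤ Δ) (hs : 1 ≤ s) :
    SWg Δ (s + Δ) = SWg Δ s + Δ + 1 := by
  have hd := Nat.div_add_mod (s - 1) Δ
  have hm : (s - 1) % Δ < Δ := Nat.mod_lt _ (by omega)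
  set p := (s - 1) / Δ with hp
  set ρ := (s - 1) % Δ with hρ
  have he : Δ * p = p * Δ := Nat.mul_comm _ _
  have hjj : s = p * Δ + (ρ + 1) := by omega
  have e1 : (p + 1) * Δ = p * Δ + Δ := by ring
  have h1 : SWg Δ s = p * Δ + (ρ + 1) + p := by rw [hjj, SWg_calc p hΔ (by omega) (by omega)]
  have h2 : SWg Δ (s + Δ) = (p + 1) * Δ + (ρ + 1) + (p + 1) := by
    rw [show s + Δ = (p + 1) * Δ + (ρ + 1) from by omega, SWg_calc (p + 1) hΔ (by omega) (by omega)]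
  omega

lemma SWg_top {Δ T : ℕ} : SWg Δ (T + 1) = T + 1 + T / Δ := by simp [SWg]

lemma SWwindow {Δ t : ℕ} (hΔ : 1 ≤ Δ) (ht : 1 ≤ t) :
    1 ≤ t - (t - 1) / (Δ + 1) ∧
    t ≤ SWg Δ (t - (t - 1) / (Δ + 1)) ∧
    SWg Δ (t - (t - 1) / (Δ + 1) - 1) < t ∧
    t + Δ < SWg Δ (t - (t - 1) / (Δ + 1) + Δ) ∧
    SWg Δ (t - (t - 1) / (Δ + 1) + Δ - 1) ≤ t + Δ := by
  have h0 : 0 < Δ + 1 := by omega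
  obtain ⟨q, r, hm, hd⟩ : ∃ q r, r < Δ + 1 ∧ (Δ + 1) * q + r = t :=
    ⟨t / (Δ + 1), t % (Δ + 1), Nat.mod_lt _ h0, Nat.div_add_mod t (Δ + 1)⟩
  have he : (Δ + 1) * q = q * Δ + q := by ring
  by_cases hr0 : r = 0
  · -- t = (Δ+1) q with q ≥ 1
    have hq1 : 1 ≤ q := by
      rcases Nat.eq_zero_or_pos q with h | h
      · exfalso; rw [h, Nat.mul_zero, Nat.zero_add] at hd; omega
      · exact h
    obtain ⟨q', rfl⟩ : ∃ q', q = q' + 1 := ⟨q - 1, by omega⟩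
    have he' : (Δ + 1) * (q' + 1) = q' * Δ + Δ + q' + 1 := by ring
    have e1 : (q' + 1) * Δ = q' * Δ + Δ := by ring
    have e2 : (q' + 2) * Δ = q' * Δ + Δ + Δ := by ring
    have hdiv : (t - 1) / (Δ + 1) = q' := by
      rw [show t - 1 = (Δ + 1) * q' + Δ from by
          have : (Δ + 1) * q' = q' * Δ + q' := by ring
          omega,
        Nat.mul_add_div h0, Nat.div_eq_of_lt (by omega)]
      omega
    have hs : t - (t - 1) / (Δ + 1) = (q' + 1) * Δ + 1 := by rw [hdiv]; omega
    rw [hs]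
    have g1 : SWg Δ ((q' + 1) * Δ + 1) = (q' + 1) * Δ + 1 + (q' + 1) :=
      SWg_calc (q' + 1) hΔ le_rfl hΔ
    have g2 : SWg Δ ((q' + 1) * Δ + 1 - 1) = (q' + 1) * Δ + (q' + 1) - 1 := by
      rw [show (q' + 1) * Δ + 1 - 1 = (q' + 1) * Δ from by omega]; exact SWg_mul (q' + 1) hΔ
    have g3 : SWg Δ ((q' + 1) * Δ + 1 + Δ) = (q' + 2) * Δ + 1 + (q' + 2) := by
      rw [show (q' + 1) * Δ + 1 + Δ = (q' + 2) * Δ + 1 from by omega]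
      exact SWg_calc (q' + 2) hΔ le_rfl hΔ
    have g4 : SWg Δ ((q' + 1) * Δ + 1 + Δ - 1) = (q' + 2) * Δ + (q' + 2) - 1 := by
      rw [show (q' + 1) * Δ + 1 + Δ - 1 = (q' + 2) * Δ from by omega]; exact SWg_mul (q' + 2) hΔ
    omega
  · -- 1 ≤ r ≤ Δ
    have hdiv : (t - 1) / (Δ + 1) = q := by
      rw [show t - 1 = (Δ + 1) * q + (r - 1) from by omega,
        Nat.mul_add_div h0, Nat.div_eq_of_lt (by omega)]
      omega
    have hs : t - (t - 1) / (Δ + 1) = q * Δ + r := by rw [hdiv]; omega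
    rw [hs]
    have e1 : (q + 1) * Δ = q * Δ + Δ := by ring
    have g1 : SWg Δ (q * Δ + r) = q * Δ + r + q := SWg_calc q hΔ (by omega) (by omega)
    have g3 : SWg Δ (q * Δ + r + Δ) = (q + 1) * Δ + r + (q + 1) := by
      rw [show q * Δ + r + Δ = (q + 1) * Δ + r from by omega]
      exact SWg_calc (q + 1) hΔ (by omega) (by omega)
    by_cases hr1 : r = 1
    · have g2 : SWg Δ (q * Δ + r - 1) = q * Δ + q - 1 := by
        rw [show q * Δ + r - 1 = q * Δ from by omega]; exact SWg_mul q hΔ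
      have g4 : SWg Δ (q * Δ + r + Δ - 1) = (q + 1) * Δ + (q + 1) - 1 := by
        rw [show q * Δ + r + Δ - 1 = (q + 1) * Δ from by omega]; exact SWg_mul (q + 1) hΔ
      omega
    · have g2 : SWg Δ (q * Δ + r - 1) = q * Δ + (r - 1) + q := by
        rw [show q * Δ + r - 1 = q * Δ + (r - 1) from by omega]
        exact SWg_calc q hΔ (by omega) (by omega)
      have g4 : SWg Δ (q * Δ + r + Δ - 1) = (q + 1) * Δ + (r - 1) + (q + 1) := by
        rw [show q * Δ + r + Δ - 1 = (q + 1) * Δ + (r - 1) from by omega]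
        exact SWg_calc (q + 1) hΔ (by omega) (by omega)
      omega


/-- `φ` is a proper sliding `Δ`-window temporal `k`-coloring of the temporal
graph with snapshots `Gs` over the time slots `[a,b]`: for every `Δ`-window
`[t, t+Δ-1] ⊆ [a,b]` and every edge appearing in that window, the edge is
properly colored at some time slot of the window at which it is active. -/
def IsSWTempColoring {W : Type*} {k : ℕ} (Gs : ℕ → SimpleGraph W)
    (a b Δ : ℕ) (φ : W → ℕ → Fin k) : Prop :=
  ∀ t, a ≤ t → t + Δ - 1 ≤ b →
    ∀ u v : W, (∃ i ∈ Finset.Icc t (t + Δ - 1), (Gs i).Adj u v) →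
      ∃ i ∈ Finset.Icc t (t + Δ - 1), (Gs i).Adj u v ∧ φ u i ≠ φ v i

/-- let `(G',λ')` be obtained from `(G,λ)` (lifetime `T`) by
inserting one trivial (edgeless) snapshot after every `Δ` consecutive
snapshots; its lifetime is `T + ⌊T/Δ⌋`, its slot `t` is trivial when
`(Δ+1) ∣ t` and otherwise equals the original slot `t - ⌊t/(Δ+1)⌋`.
Then `(G,λ)` admits a proper sliding `Δ`-window temporal `k`-coloring iff
`(G',λ')` admits a proper sliding `(Δ+1)`-window temporal `k`-coloring. -/
theorem stmt_5 {V : Type*} (Gs : ℕ → SimpleGraph V) (T Δ k : ℕ)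
    (hΔ : 1 ≤ Δ) (hΔT : Δ ≤ T) (hk : 1 ≤ k)
    (Gs' : ℕ → SimpleGraph V)
    (hGs' : ∀ t, Gs' t = if (Δ + 1) ∣ t then ⊥ else Gs (t - t / (Δ + 1))) :
    (∃ φ : V → ℕ → Fin k, IsSWTempColoring Gs 1 T Δ φ) ↔
      (∃ φ : V → ℕ → Fin k,
        IsSWTempColoring Gs' 1 (T + T / Δ) (Δ + 1) φ) := by
  constructor
  · rintro ⟨φ, hφ⟩
    refine ⟨fun u i => φ u (i - i / (Δ + 1)), ?_⟩
    intro t ht htb u v h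
    obtain ⟨i, hi, hadj⟩ := h
    rw [Finset.mem_Icc] at hi
    have hib : t ≤ i ∧ i ≤ t + Δ := by omega
    have hnd : ¬ (Δ + 1) ∣ i := by
      intro hdvd
      rw [hGs' i, if_pos hdvd] at hadj
      simp at hadj
    have hadj' : (Gs (i - i / (Δ + 1))).Adj u v := by
      rw [hGs' i, if_neg hnd] at hadj; exact hadj
    obtain ⟨hs1, hN1, hN2, hN3a, hN3b⟩ := SWwindow hΔ ht
    set s := t - (t - 1) / (Δ + 1) with hsdef
    have hsT : s + Δ - 1 ≤ T := by
      by_contra hcon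
      have h1 : T + 1 ≤ s + Δ - 1 := by omega
      have h2 := SWg_mono Δ h1
      rw [SWg_top] at h2
      omega
    -- f i lies in [s, s+Δ-1]
    obtain ⟨hgi, hfi1⟩ := SWg_inv hΔ hnd
    have hfi_lb : s ≤ i - i / (Δ + 1) := by
      by_contra hcon
      have h2 := SWg_mono Δ (show i - i / (Δ + 1) ≤ s - 1 from by omega)
      rw [hgi] at h2
      omega
    have hfi_ub : i - i / (Δ + 1) ≤ s + Δ - 1 := by
      by_contra hcon
      have h2 := SWg_mono Δ (show s + Δ ≤ i - i / (Δ + 1) from by omega)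
      rw [hgi] at h2
      omega
    obtain ⟨j, hj, hjadj, hjcol⟩ := hφ s hs1 (by omega) u v
      ⟨i - i / (Δ + 1), Finset.mem_Icc.2 ⟨hfi_lb, hfi_ub⟩, hadj'⟩
    rw [Finset.mem_Icc] at hj
    have hj1 : 1 ≤ j := by omega
    obtain ⟨hjnd, hjf⟩ := SWf_inv hΔ hj1
    refine ⟨SWg Δ j, Finset.mem_Icc.2 ⟨?_, ?_⟩, ?_, ?_⟩
    · have h2 := SWg_mono Δ hj.1
      omega
    · have h2 := SWg_mono Δ hj.2
      omega
    · rw [hGs' _, if_neg hjnd, hjf]; exact hjadj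
    · simp only []
      rw [hjf]
      exact hjcol
  · rintro ⟨φ, hφ⟩
    refine ⟨fun u j => φ u (SWg Δ j), ?_⟩
    intro s hs1 hsT u v h
    obtain ⟨j0, hj0, hadj0⟩ := h
    rw [Finset.mem_Icc] at hj0
    have hgs : s ≤ SWg Δ s := Nat.le_add_right _ _
    have ht1 : 1 ≤ SWg Δ s := le_trans hs1 hgs
    have hshift : SWg Δ (s + Δ) = SWg Δ s + Δ + 1 := SWg_shift hΔ hs1
    have htb : SWg Δ s + (Δ + 1) - 1 ≤ T + T / Δ := by
      have h1 : s + Δ ≤ T + 1 := by omega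
      have h2 := SWg_mono Δ h1
      rw [SWg_top] at h2
      omega
    have hj01 : 1 ≤ j0 := by omega
    obtain ⟨hnd0, hf0⟩ := SWf_inv hΔ hj01
    have hmem0 : SWg Δ j0 ∈ Finset.Icc (SWg Δ s) (SWg Δ s + (Δ + 1) - 1) := by
      rw [Finset.mem_Icc]
      refine ⟨SWg_mono Δ hj0.1, ?_⟩
      have h2 := SWg_mono Δ (show j0 ≤ s + Δ - 1 from hj0.2)
      have h3 := SWg_strict Δ (show s + Δ - 1 < s + Δ from by omega)
      omega
    obtain ⟨j', hj', hadj', hcol'⟩ := hφ (SWg Δ s) ht1 htb u v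
      ⟨SWg Δ j0, hmem0, by rw [hGs' _, if_neg hnd0, hf0]; exact hadj0⟩
    rw [Finset.mem_Icc] at hj'
    have hnd' : ¬ (Δ + 1) ∣ j' := by
      intro hdvd
      rw [hGs' j', if_pos hdvd] at hadj'
      simp at hadj'
    obtain ⟨hginv, hge1⟩ := SWg_inv hΔ hnd'
    have hlb : s ≤ j' - j' / (Δ + 1) := by
      by_contra hcon
      have h2 := SWg_mono Δ (show j' - j' / (Δ + 1) ≤ s - 1 from by omega)
      rw [hginv] at h2
      have h3 := SWg_strict Δ (show s - 1 < s from by omega)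
      omega
    have hub : j' - j' / (Δ + 1) ≤ s + Δ - 1 := by
      by_contra hcon
      have h2 := SWg_mono Δ (show s + Δ ≤ j' - j' / (Δ + 1) from by omega)
      rw [hginv] at h2
      omega
    refine ⟨j' - j' / (Δ + 1), Finset.mem_Icc.2 ⟨hlb, hub⟩, ?_, ?_⟩
    · rw [hGs' j', if_neg hnd'] at hadj'; exact hadj'
    · simp only []
      rw [hginv]
      exact hcol'
end

section
/- Let (G,λ) = (G₁, G₂, …, G_i) and (G',λ') = (G_j, G_{j+1}, …, G_ℓ) be two temporal graphs over the same vertex set V with j + Δ − 1 ≤ i ≤ ℓ (so that the snapshots with indices in [j,i] are shared). Let φ = (φ₁,…,φ_i) and ψ = (ψ_j,…,ψ_ℓ) be temporal colorings with k colors of (G,λ) and (G',λ'), respectively, such that for all v ∈ V and all i* with j ≤ i* ≤ i, φ(v,i*) = ψ(v,i*). Then φ and ψ are both proper sliding Δ-window temporal k-colorings of their respective temporal graphs if and only if the concatenation (φ₁, φ₂, …, φ_i, ψ_{i+1}, …, ψ_ℓ) is a proper sliding Δ-window temporal k-coloring of (G★,λ★) = (G₁, G₂, …, G_ℓ). -/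
/-- let `(G₁,…,G_i)` and `(G_j,…,G_ℓ)` be temporal graphs over the
same vertex set with `j + Δ - 1 ≤ i ≤ ℓ`, and let `φ` and `ψ` be temporal
`k`-colorings of them agreeing on all slots in `[j,i]`.  Then `φ` and `ψ` are
both proper sliding `Δ`-window temporal `k`-colorings iff their concatenation
(using `φ` on slots `≤ i` and `ψ` afterwards) is a proper sliding `Δ`-window
temporal `k`-coloring of `(G₁,…,G_ℓ)`. -/
theorem stmt_6 {V : Type*} (Gs : ℕ → SimpleGraph V) (i j ℓ Δ k : ℕ)
    (hj : 1 ≤ j) (hΔ : 1 ≤ Δ) (hji : j + Δ - 1 ≤ i) (hiℓ : i ≤ ℓ)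
    (φ ψ : V → ℕ → Fin k)
    (hagree : ∀ v : V, ∀ t, j ≤ t → t ≤ i → φ v t = ψ v t) :
    (IsSWTempColoring Gs 1 i Δ φ ∧ IsSWTempColoring Gs j ℓ Δ ψ) ↔
      IsSWTempColoring Gs 1 ℓ Δ (fun v t => if t ≤ i then φ v t else ψ v t) := by
  have hχψ : ∀ (v : V) s, j ≤ s → (if s ≤ i then φ v s else ψ v s) = ψ v s := by
    intro v s hs
    split
    · exact hagree v s hs ‹s ≤ i›
    · rfl
  constructor
  · rintro ⟨hφ, hψ⟩ t ht htℓ u v ⟨s, hs, hadj⟩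
    by_cases hcase : t + Δ - 1 ≤ i
    · obtain ⟨s', hs', hadj', hne⟩ := hφ t ht hcase u v ⟨s, hs, hadj⟩
      refine ⟨s', hs', hadj', ?_⟩
      have hsi : s' ≤ i := le_trans (Finset.mem_Icc.mp hs').2 hcase
      simpa [hsi] using hne
    · have htj : j ≤ t := by omega
      obtain ⟨s', hs', hadj', hne⟩ := hψ t htj htℓ u v ⟨s, hs, hadj⟩
      refine ⟨s', hs', hadj', ?_⟩
      have hjs' : j ≤ s' := le_trans htj (Finset.mem_Icc.mp hs').1
      simp only [hχψ u s' hjs', hχψ v s' hjs']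
      exact hne
  · intro hχ
    constructor
    · intro t ht hti u v hex
      have htℓ : t + Δ - 1 ≤ ℓ := le_trans hti hiℓ
      obtain ⟨s', hs', hadj', hne⟩ := hχ t ht htℓ u v hex
      refine ⟨s', hs', hadj', ?_⟩
      have hsi : s' ≤ i := le_trans (Finset.mem_Icc.mp hs').2 hti
      simpa [hsi] using hne
    · intro t ht htℓ u v hex
      obtain ⟨s', hs', hadj', hne⟩ := hχ t (le_trans hj ht) htℓ u v hex
      refine ⟨s', hs', hadj', ?_⟩
      have hjs' : j ≤ s' := le_trans ht (Finset.mem_Icc.mp hs').1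
      have h1 := hχψ u s' hjs'
      have h2 := hχψ v s' hjs'
      simp only at hne
      rw [h1, h2] at hne
      exact hne
end

section
/- Let (G,λ) = (G₁, …, G_T) be a temporal graph, let Δ ≥ 1 divide T with T ≥ 2Δ, and let k ≥ 1. For i ∈ {0, 1, …, T/Δ − 2}, let W_i denote the 2Δ-window [iΔ+1, (i+2)Δ]. Then (G,λ) admits a proper sliding Δ-window temporal k-coloring if and only if there exist, for every i ∈ {0, 1, …, T/Δ − 2}, a proper sliding Δ-window temporal k-coloring φ^{(i)} of the restriction (G,λ)|_{W_i} such that for every i ∈ {0, 1, …, T/Δ − 3}, the colorings φ^{(i)} and φ^{(i+1)} agree on all vertex appearances in the overlapping time slots [(i+1)Δ+1, (i+2)Δ]. -/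
/-- for `Δ ∣ T`, `T ≥ 2Δ`, the temporal graph admits a proper
sliding `Δ`-window temporal `k`-coloring iff there are proper sliding
`Δ`-window temporal `k`-colorings `φ⁽ⁱ⁾` of the restrictions to the
`2Δ`-windows `W_i = [iΔ+1, (i+2)Δ]` (for `0 ≤ i ≤ T/Δ - 2`) such that
consecutive ones agree on the overlapping slots `[(i+1)Δ+1, (i+2)Δ]`. -/
theorem stmt_7 {V : Type*} (Gs : ℕ → SimpleGraph V) (T Δ k : ℕ)
    (hΔ : 1 ≤ Δ) (hdvd : Δ ∣ T) (hT : 2 * Δ ≤ T) (hk : 1 ≤ k) :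
    (∃ φ : V → ℕ → Fin k, IsSWTempColoring Gs 1 T Δ φ) ↔
      (∃ φ : ℕ → V → ℕ → Fin k,
        (∀ i, i ≤ T / Δ - 2 →
          IsSWTempColoring Gs (i * Δ + 1) ((i + 2) * Δ) Δ (φ i)) ∧
        (∀ i, i + 1 ≤ T / Δ - 2 → ∀ v : V, ∀ t,
          (i + 1) * Δ + 1 ≤ t → t ≤ (i + 2) * Δ →
          φ i v t = φ (i + 1) v t)) := by
  have hΔpos : 0 < Δ := hΔ
  have hN2 : 2 ≤ T / Δ := (Nat.le_div_iff_mul_le hΔpos).2 (by omega)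
  have hTN : T / Δ * Δ = T := Nat.div_mul_cancel hdvd
  constructor
  · rintro ⟨φ, hφ⟩
    refine ⟨fun _ => φ, fun i hi => ?_, fun _ _ _ _ _ _ => rfl⟩
    intro t ht1 ht2 u v hadj
    have hle : (i + 2) * Δ ≤ T := by
      calc (i + 2) * Δ ≤ T / Δ * Δ := Nat.mul_le_mul_right Δ (by omega)
        _ = T := hTN
    refine hφ t (by omega) (by omega) u v hadj
  · rintro ⟨φ, hφ, hagree⟩
    set M := T / Δ - 2 with hM
    have key : ∀ i, i ≤ M → ∀ v s, i * Δ + 1 ≤ s → s ≤ (i + 2) * Δ →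
        φ i v s = φ (min ((s - 1) / Δ) M) v s := by
      intro i hi v s hs1 hs2
      have h1 : i ≤ (s - 1) / Δ := (Nat.le_div_iff_mul_le hΔpos).2 (by omega)
      have h2 : (s - 1) / Δ < i + 2 := by
        refine (Nat.div_lt_iff_lt_mul hΔpos).2 ?_
        omega
      rcases Nat.lt_or_ge ((s - 1) / Δ) (i + 1) with h | h
      · have he : (s - 1) / Δ = i := by omega
        rw [he, min_eq_left hi]
      · have he : (s - 1) / Δ = i + 1 := by omega
        rw [he]
        rcases le_or_gt (i + 1) M with hm | hm
        · rw [min_eq_left hm]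
          have hs1' : (i + 1) * Δ ≤ s - 1 := by
            rw [← he]; exact Nat.div_mul_le_self _ _
          exact hagree i hm v s (by omega) hs2
        · have : i = M := by omega
          subst this
          rw [min_eq_right (by omega)]
    refine ⟨fun v t => φ (min ((t - 1) / Δ) M) v t, ?_⟩
    intro t ht1 ht2 u v hadj
    set j := (t - 1) / Δ with hj
    set i := min j M with hi
    have hiM : i ≤ M := min_le_right _ _
    have hp1 : j * Δ ≤ t - 1 := Nat.div_mul_le_self _ _
    have hp1' : i * Δ ≤ j * Δ := Nat.mul_le_mul_right Δ (min_le_left _ _)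
    have hit : i * Δ + 1 ≤ t := by omega
    have hib : t + Δ - 1 ≤ (i + 2) * Δ := by
      rcases le_or_gt j M with hjm | hjm
      · have hij : i = j := min_eq_left hjm
        have ht' : t - 1 < (j + 1) * Δ :=
          (Nat.div_lt_iff_lt_mul hΔpos).1 (by omega)
        have he : (j + 2) * Δ = (j + 1) * Δ + Δ := by ring
        rw [hij]; omega
      · have hij : i = M := min_eq_right (by omega)
        have he : (M + 2) * Δ = T := by
          rw [hM]
          have : T / Δ - 2 + 2 = T / Δ := by omega
          rw [this, hTN]
        rw [hij]; omega
    obtain ⟨s, hsmem, hsadj, hsne⟩ := hφ i hiM t hit hib u v hadj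
    refine ⟨s, hsmem, hsadj, ?_⟩
    simp only [Finset.mem_Icc] at hsmem
    have hs1 : i * Δ + 1 ≤ s := by omega
    have hs2 : s ≤ (i + 2) * Δ := by omega
    show φ (min ((s - 1) / Δ) M) u s ≠ φ (min ((s - 1) / Δ) M) v s
    rw [← key i hiM u s hs1 hs2, ← key i hiM v s hs1 hs2]
    exact hsne
end

section
/- Let (G,λ) be a temporal graph with lifetime T on vertex set V, let Δ ≤ T, and let C ⊆ V be a vertex cover of the underlying graph G (i.e., every edge of G has at least one endpoint in C). If ψ is a proper sliding Δ-window temporal k-coloring of the induced temporal subgraph (G[C], λ_C), then the temporal coloring φ of (G,λ) defined by φ(v,t) = ψ(v,t) for v ∈ C and φ(v,t) = k+1 (a fresh color) for v ∈ V∖C, for all t ∈ [T], is a proper sliding Δ-window temporal (k+1)-coloring of (G,λ). -/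
/-- let `C` be a vertex cover of the underlying graph of `(G,λ)`.
If `ψ` is a proper sliding `Δ`-window temporal `k`-coloring of the induced
temporal subgraph `(G[C], λ_C)`, then the coloring of `(G,λ)` that uses `ψ` on
`C` and a fresh `(k+1)`-st color on `V ∖ C` is a proper sliding `Δ`-window
temporal `(k+1)`-coloring of `(G,λ)`. -/
theorem stmt_9 {V : Type*} (Gs : ℕ → SimpleGraph V) (T Δ k : ℕ)
    (hΔ : 1 ≤ Δ) (hΔT : Δ ≤ T)
    (C : Set V) [DecidablePred (· ∈ C)]
    (hcover : ∀ t ∈ Finset.Icc 1 T, ∀ u v : V, (Gs t).Adj u v → u ∈ C ∨ v ∈ C)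
    (ψ : C → ℕ → Fin k)
    (hψ : IsSWTempColoring (fun t => SimpleGraph.induce C (Gs t)) 1 T Δ ψ) :
    IsSWTempColoring Gs 1 T Δ
      (fun v t => if h : v ∈ C then (ψ ⟨v, h⟩ t).castSucc else Fin.last k) := by
  intro t ht htT u v ⟨i, hi, hadj⟩
  simp only [Finset.mem_Icc] at hi
  have hiT : i ∈ Finset.Icc 1 T := Finset.mem_Icc.mpr ⟨le_trans ht hi.1, le_trans hi.2 htT⟩
  by_cases hu : u ∈ C <;> by_cases hv : v ∈ C
  · obtain ⟨j, hj, hadjj, hne⟩ := hψ t ht htT ⟨u, hu⟩ ⟨v, hv⟩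
      ⟨i, Finset.mem_Icc.mpr hi, hadj⟩
    exact ⟨j, hj, hadjj, by simp [hu, hv, Fin.castSucc_inj, hne]⟩
  · refine ⟨i, Finset.mem_Icc.mpr hi, hadj, ?_⟩
    simp only [hu, hv, dif_pos, dif_neg, not_false_iff]
    exact fun h => (Fin.castSucc_lt_last _).ne h
  · refine ⟨i, Finset.mem_Icc.mpr hi, hadj, ?_⟩
    simp only [hu, hv, dif_pos, dif_neg, not_false_iff]
    exact fun h => (Fin.castSucc_lt_last _).ne h.symm
  · rcases hcover i hiT u v hadj with h | h
    · exact absurd h hu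
    · exact absurd h hv
end

section
/- Let (G,λ) be a temporal graph with lifetime T on vertex set V, let Δ ≤ T, and let C ⊆ V be a vertex cover of the underlying graph G. Let k* be the minimum number of colors of a proper sliding Δ-window temporal coloring of the induced temporal subgraph (G[C], λ_C), and let k be the minimum number of colors of a proper sliding Δ-window temporal coloring of (G,λ). Then k* ≤ k ≤ k* + 1. -/
/-- let `C` be a vertex cover of the underlying graph of `(G,λ)`,
let `kstar` be the minimum number of colors of a proper sliding `Δ`-window
temporal coloring of the induced temporal subgraph `(G[C], λ_C)`, and `kmin`
the minimum number of colors of a proper sliding `Δ`-window temporal coloring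
of `(G,λ)`.  Then `kstar ≤ kmin ≤ kstar + 1`. -/
theorem stmt_10 {V : Type*} [Fintype V] (Gs : ℕ → SimpleGraph V) (T Δ : ℕ)
    (hΔ : 1 ≤ Δ) (hΔT : Δ ≤ T) (C : Set V)
    (hcover : ∀ t ∈ Finset.Icc 1 T, ∀ u v : V, (Gs t).Adj u v → u ∈ C ∨ v ∈ C)
    (kstar kmin : ℕ)
    (hkstar : kstar = sInf {k : ℕ | ∃ φ : C → ℕ → Fin k,
      IsSWTempColoring (fun t => SimpleGraph.induce C (Gs t)) 1 T Δ φ})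
    (hkmin : kmin = sInf {k : ℕ | ∃ φ : V → ℕ → Fin k,
      IsSWTempColoring Gs 1 T Δ φ}) :
    kstar ≤ kmin ∧ kmin ≤ kstar + 1 := by
  classical
  set S : Set ℕ := {k : ℕ | ∃ φ : V → ℕ → Fin k, IsSWTempColoring Gs 1 T Δ φ} with hS
  set S' : Set ℕ := {k : ℕ | ∃ φ : C → ℕ → Fin k,
      IsSWTempColoring (fun t => SimpleGraph.induce C (Gs t)) 1 T Δ φ} with hS'
  have hSne : S.Nonempty := by
    refine ⟨Fintype.card V, fun v _ => Fintype.equivFin V v, ?_⟩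
    intro t h1 h2 u v ⟨i, hi, hadj⟩
    exact ⟨i, hi, hadj, (Fintype.equivFin V).injective.ne hadj.ne⟩
  have : Fintype C := Fintype.ofFinite C
  have hS'ne : S'.Nonempty := by
    refine ⟨Fintype.card C, fun v _ => Fintype.equivFin C v, ?_⟩
    intro t h1 h2 u v ⟨i, hi, hadj⟩
    exact ⟨i, hi, hadj, (Fintype.equivFin C).injective.ne hadj.ne⟩
  constructor
  · -- kstar ≤ kmin
    have hmem : kmin ∈ S := hkmin ▸ Nat.sInf_mem hSne
    obtain ⟨φ, hφ⟩ := hmem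
    have : kmin ∈ S' := by
      refine ⟨fun u t => φ u t, ?_⟩
      intro t h1 h2 u v ⟨i, hi, hadj⟩
      obtain ⟨j, hj, hadjj, hne⟩ := hφ t h1 h2 u v ⟨i, hi, hadj⟩
      exact ⟨j, hj, hadjj, hne⟩
    rw [hkstar]
    exact Nat.sInf_le this
  · -- kmin ≤ kstar + 1
    have hmem : kstar ∈ S' := hkstar ▸ Nat.sInf_mem hS'ne
    obtain ⟨ψ, hψ⟩ := hmem
    have : kstar + 1 ∈ S := by
      refine ⟨fun v t => if h : v ∈ C then (ψ ⟨v, h⟩ t).castSucc else Fin.last kstar, ?_⟩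
      intro t h1 h2 u v ⟨i, hi, hadj⟩
      simp only [Finset.mem_Icc] at hi
      have hiT : i ∈ Finset.Icc 1 T :=
        Finset.mem_Icc.mpr ⟨le_trans h1 hi.1, le_trans hi.2 h2⟩
      by_cases hu : u ∈ C
      · by_cases hv : v ∈ C
        · obtain ⟨j, hj, hadjj, hne⟩ := hψ t h1 h2 ⟨u, hu⟩ ⟨v, hv⟩
            ⟨i, Finset.mem_Icc.mpr hi, hadj⟩
          refine ⟨j, hj, hadjj, ?_⟩
          simp only [hu, hv, dif_pos]
          exact fun h => hne (Fin.castSucc_injective _ h)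
        · refine ⟨i, Finset.mem_Icc.mpr hi, hadj, ?_⟩
          simp only [hu, hv, dif_pos, dif_neg, not_false_iff]
          exact (Fin.castSucc_lt_last _).ne
      · have hv : v ∈ C := (hcover i hiT u v hadj).resolve_left hu
        refine ⟨i, Finset.mem_Icc.mpr hi, hadj, ?_⟩
        simp only [hu, hv, dif_pos, dif_neg, not_false_iff]
        exact (Fin.castSucc_lt_last _).ne'
    rw [hkmin]
    exact Nat.sInf_le this
end
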